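/- For monotone submodular valuations over goods, EFL_WC (indeed full envy-freeness) does not guarantee more than a 1/n fraction of the maximin share: in the instance with n agents, n² goods y^i_j (1 ≤ i, j ≤ n), one copy each, and common valuation v(S) = |{i : ∃j, y^i_j ∈ S}|, the allocation giving agent θ the bundle {y^θ_1, …, y^θ_n} is envy-free but gives each agent value 1, while the maximin share equals n. -/

import Mathlib

open Finset

def IsAlloc {τ : Type*} [Fintype τ] [DecidableEq τ] (n : ℕ) (k : τ → ℕ)
    (A : Fin n → Finset τ) : Prop :=
  ∀ t, (Finset.univ.filter fun i => t ∈ A i).card = k t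

/-- MMS for a general (not necessarily additive) valuation. -/
noncomputable def MMSgen {τ : Type*} [Fintype τ] [DecidableEq τ] (n : ℕ)
    (k : τ → ℕ) (V : Finset τ → ℝ) : ℝ :=
  ⨆ B : {B : Fin n → Finset τ // IsAlloc n k B}, ⨅ j, V (B.1 j)

/-- The common valuation: number of groups represented in the bundle. -/
noncomputable def Vsub (n : ℕ) (S : Finset (Fin n × Fin n)) : ℝ :=
  ((S.image Prod.fst).card : ℝ)

theorem Finset.card_image_union_add_card_image_inter_le {α β : Type*} [DecidableEq α]
    [DecidableEq β] (f : α → β) (s t : Finset α) :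
    #((s ∪ t).image f) + #((s ∩ t).image f) ≤ #(s.image f) + #(t.image f) :=
  calc #((s ∪ t).image f) + #((s ∩ t).image f)
      ≤ #(s.image f ∪ t.image f) + #(s.image f ∩ t.image f) := by
        rw [image_union]
        exact Nat.add_le_add_left (card_le_card (image_inter_subset f s t)) _
    _ = #(s.image f) + #(t.image f) := card_union_add_card_inter _ _

theorem isAlloc_fibers {τ : Type*} [Fintype τ] [DecidableEq τ] {n : ℕ} (g : τ → Fin n) :
    IsAlloc n (fun _ => 1) fun j => univ.filter fun t => g t = j := by
  intro t
  simp [filter_eq]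

theorem MMSgen_eq_of_isAlloc {τ : Type*} [Fintype τ] [DecidableEq τ] {n : ℕ} [NeZero n]
    {k : τ → ℕ} {V : Finset τ → ℝ} {c : ℝ} {B : Fin n → Finset τ} (hB : IsAlloc n k B)
    (hB_ge : ∀ j, c ≤ V (B j)) (hV_le : ∀ S, V S ≤ c) : MMSgen n k V = c := by
  have : Nonempty {B // IsAlloc n k B} := ⟨⟨B, hB⟩⟩
  have hmin_le : ∀ B' : {B // IsAlloc n k B}, ⨅ j, V (B'.1 j) ≤ c := fun B' =>
    (ciInf_le (Finite.bddBelow_range _) 0).trans (hV_le _)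
  refine le_antisymm (ciSup_le hmin_le) ?_
  calc c ≤ ⨅ j, V (B j) := le_ciInf hB_ge
    _ ≤ MMSgen n k V := le_ciSup (f := fun B' : {B // IsAlloc n k B} => ⨅ j, V (B'.1 j))
        ⟨c, Set.forall_mem_range.2 hmin_le⟩ ⟨B, hB⟩

section Vsub

variable {n : ℕ}

theorem Vsub_mono {S T : Finset (Fin n × Fin n)} (h : S ⊆ T) : Vsub n S ≤ Vsub n T := by
  unfold Vsub
  exact_mod_cast card_le_card (image_subset_image h)

theorem Vsub_union_add_Vsub_inter_le (S T : Finset (Fin n × Fin n)) :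
    Vsub n (S ∪ T) + Vsub n (S ∩ T) ≤ Vsub n S + Vsub n T := by
  unfold Vsub
  exact_mod_cast card_image_union_add_card_image_inter_le Prod.fst S T

theorem Vsub_le (S : Finset (Fin n × Fin n)) : Vsub n S ≤ n := by
  unfold Vsub
  simpa using (Nat.cast_le (α := ℝ)).2 (card_le_univ (S.image Prod.fst))

theorem Vsub_filter_fst_eq (θ : Fin n) : Vsub n (univ.filter fun p => p.1 = θ) = 1 := by
  have : (univ.filter fun p : Fin n × Fin n => p.1 = θ).image Prod.fst = {θ} := by
    ext i
    simpa [eq_comm] using fun _ => ⟨θ⟩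
  simp [Vsub, this]

theorem Vsub_filter_snd_eq (j : Fin n) : Vsub n (univ.filter fun p => p.2 = j) = n := by
  have : (univ.filter fun p : Fin n × Fin n => p.2 = j).image Prod.fst = univ :=
    eq_univ_of_forall fun i => mem_image.2 ⟨(i, j), by simp, rfl⟩
  simp [Vsub, this]

end Vsub

/-- The valuation V(S) = |{i : ∃ j, y^i_j ∈ S}| over the n²
goods y^i_j is monotone and submodular; the allocation giving agent θ the
bundle {y^θ_1,…,y^θ_n} is an exclusive allocation that is envy-free, yet
gives every agent value 1 while the maximin share equals n. Hence for
monotone submodular valuations, envy-freeness (and so EFL_WC) guarantees no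
more than 1/n of MMS. -/
theorem submodular_ef_mms_gap (n : ℕ) (hn : 0 < n)
    (A : Fin n → Finset (Fin n × Fin n))
    (hAdef : A = fun θ => Finset.univ.filter fun p => p.1 = θ) :
    (∀ S₁ S₂ : Finset (Fin n × Fin n), S₁ ⊆ S₂ → Vsub n S₁ ≤ Vsub n S₂) ∧
    (∀ S₁ S₂ : Finset (Fin n × Fin n),
      Vsub n (S₁ ∪ S₂) + Vsub n (S₁ ∩ S₂) ≤ Vsub n S₁ + Vsub n S₂) ∧
    IsAlloc n (fun _ => 1) A ∧
    (∀ i j, Vsub n (A j) ≤ Vsub n (A i)) ∧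
    (∀ i, Vsub n (A i) = 1) ∧
    MMSgen n (fun _ => 1) (Vsub n) = n := by
  subst hAdef
  have : NeZero n := ⟨hn.ne'⟩
  refine ⟨fun _ _ => Vsub_mono, Vsub_union_add_Vsub_inter_le, isAlloc_fibers Prod.fst,
    fun i j => by rw [Vsub_filter_fst_eq, Vsub_filter_fst_eq], Vsub_filter_fst_eq, ?_⟩
  -- the columns {y^1_j, …, y^n_j} form an allocation giving every agent all n groups
  exact MMSgen_eq_of_isAlloc (isAlloc_fibers Prod.snd) (fun j => (Vsub_filter_snd_eq j).ge) Vsub_le
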